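/- Let p₁, q₁, p₂, q₂ be real numbers. Both roots of the quadratic equation λ² + (p₁ + i q₁) λ + (p₂ + i q₂) = 0 (over ℂ) have strictly negative real part if and only if p₁ > 0 and p₁² p₂ + p₁ q₁ q₂ − q₂² > 0. -/
import Mathlib

open Complex

private lemma quad_fac_helper (a b d : ℂ) (hd : d ^ 2 = a ^ 2 - 4 * b) (l : ℂ) :
    l ^ 2 + a * l + b = (l - (-a + d) / 2) * (l - (-a - d) / 2) := by
  linear_combination (1 / 4 : ℂ) * hd

theorem routh_hurwitz_quadratic (p₁ q₁ p₂ q₂ : ℝ) :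
    (∀ l : ℂ, l ^ 2 + (↑p₁ + ↑q₁ * Complex.I) * l + (↑p₂ + ↑q₂ * Complex.I) = 0 → l.re < 0) ↔
      (0 < p₁ ∧ 0 < p₁ ^ 2 * p₂ + p₁ * q₁ * q₂ - q₂ ^ 2) := by
  obtain ⟨d, hd⟩ : ∃ d : ℂ, d ^ 2 = (↑p₁ + ↑q₁ * Complex.I) ^ 2 - 4 * (↑p₂ + ↑q₂ * Complex.I) :=
    IsAlgClosed.exists_pow_nat_eq _ zero_lt_two
  obtain ⟨l₁, l₂, hfac⟩ : ∃ l₁ l₂ : ℂ, ∀ l : ℂ,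
      l ^ 2 + (↑p₁ + ↑q₁ * Complex.I) * l + (↑p₂ + ↑q₂ * Complex.I) = (l - l₁) * (l - l₂) :=
    ⟨_, _, fun l => quad_fac_helper _ _ d hd l⟩
  have hprod : l₁ * l₂ = ↑p₂ + ↑q₂ * Complex.I := by linear_combination -(hfac 0)
  have hsum : l₁ + l₂ = -(↑p₁ + ↑q₁ * Complex.I) := by
    linear_combination hfac 1 - hfac 0
  have e1 : p₁ = -(l₁.re + l₂.re) := by
    have := congrArg Complex.re hsum
    simp at this
    linarith
  have e2 : q₁ = -(l₁.im + l₂.im) := by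
    have := congrArg Complex.im hsum
    simp at this
    linarith
  have e3 : p₂ = l₁.re * l₂.re - l₁.im * l₂.im := by
    have := congrArg Complex.re hprod
    simp [Complex.mul_re] at this
    linarith
  have e4 : q₂ = l₁.re * l₂.im + l₁.im * l₂.re := by
    have := congrArg Complex.im hprod
    simp [Complex.mul_im] at this
    linarith
  subst e1 e2 e3 e4
  constructor
  · intro h
    have h1 : l₁.re < 0 := by
      apply h
      rw [hfac]; ring
    have h2 : l₂.re < 0 := by
      apply h
      rw [hfac]; ring
    have hpos : 0 < l₁.re * l₂.re := mul_pos_of_neg_of_neg h1 h2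
    have hsq : 0 < (l₁.re + l₂.re) ^ 2 := by nlinarith
    constructor
    · linarith
    · nlinarith [mul_pos hpos hsq, mul_nonneg hpos.le (sq_nonneg (l₁.im - l₂.im))]
  · rintro ⟨hp, hH⟩
    have hx : 0 < l₁.re * l₂.re := by
      by_contra hc
      push_neg at hc
      nlinarith [mul_nonneg (neg_nonneg.2 hc)
        (add_nonneg (sq_nonneg (l₁.re + l₂.re)) (sq_nonneg (l₁.im - l₂.im)))]
    intro l hl
    rw [hfac] at hl
    rcases mul_eq_zero.1 hl with h | h
    · have hl1 : l = l₁ := sub_eq_zero.1 h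
      subst hl1
      by_contra hc
      push_neg at hc
      nlinarith [mul_nonneg hc (show (0:ℝ) ≤ -l₂.re by nlinarith)]
    · have hl2 : l = l₂ := sub_eq_zero.1 h
      subst hl2
      by_contra hc
      push_neg at hc
      nlinarith [mul_nonneg hc (show (0:ℝ) ≤ -l₁.re by nlinarith)]
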